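/- Let d ≥ 1, ω ∈ ℝ, let λ, μ : ℝ^d → ℝ and p : ℝ^d → ℝ be continuously differentiable, and let w : ℝ^d → ℝ^d be smooth and compactly supported. Write E(w) = ∇w + (∇w)ᵗ. Suppose the difference system ∇(λ div w) + ω² w + ∇·(μ E(w)) = ∇p holds pointwise on ℝ^d. Then ∫_{ℝ^d} λ(x)(div w(x))² dx + ½ ∫_{ℝ^d} μ(x)|E(w)(x)|² dx − ω² ∫_{ℝ^d} |w(x)|² dx = ∫_{ℝ^d} p(x)(div w)(x) dx. -/

import Mathlib

open MeasureTheory Matrix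

/-- Jacobian matrix `(∇v)_{ij} = ∂v_i/∂x_j`. -/
noncomputable def jac {d : ℕ} (u : (Fin d → ℝ) → (Fin d → ℝ)) (x : Fin d → ℝ) :
    Matrix (Fin d) (Fin d) ℝ :=
  Matrix.of fun i j => fderiv ℝ u x (Pi.single j 1) i

/-- `E(v) = ∇v + (∇v)ᵗ`. -/
noncomputable def Ef {d : ℕ} (u : (Fin d → ℝ) → (Fin d → ℝ)) (x : Fin d → ℝ) :
    Matrix (Fin d) (Fin d) ℝ :=
  jac u x + (jac u x)ᵀ

/-- Divergence `div v = Σ_i ∂v_i/∂x_i`. -/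
noncomputable def divg {d : ℕ} (u : (Fin d → ℝ) → (Fin d → ℝ)) (x : Fin d → ℝ) : ℝ :=
  ∑ i, jac u x i i

/-- Gradient of a scalar function. -/
noncomputable def gradf {d : ℕ} (p : (Fin d → ℝ) → ℝ) (x : Fin d → ℝ) : Fin d → ℝ :=
  fun i => fderiv ℝ p x (Pi.single i 1)

/-- Divergence of a matrix field: `(∇·M)_i = Σ_j ∂M_{ij}/∂x_j`. -/
noncomputable def divMat {d : ℕ} (M : (Fin d → ℝ) → Matrix (Fin d) (Fin d) ℝ)
    (x : Fin d → ℝ) : Fin d → ℝ :=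
  fun i => ∑ j, fderiv ℝ (fun y => M y i j) x (Pi.single j 1)

/-- Frobenius inner product `A : B = Σ_{ij} A_{ij} B_{ij}`. -/
def frob {d : ℕ} (A B : Matrix (Fin d) (Fin d) ℝ) : ℝ := ∑ i, ∑ j, A i j * B i j

/- ### Auxiliary lemmas -/

section Aux
variable {d : ℕ}

/-- The integral of a partial derivative of a `C¹` compactly supported function vanishes. -/
lemma integral_pderiv_eq_zero (h : (Fin d → ℝ) → ℝ) (hh : ContDiff ℝ 1 h)
    (hc : HasCompactSupport h) (v : Fin d → ℝ) :
    ∫ x : Fin d → ℝ, fderiv ℝ h x v = 0 := by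
  obtain ⟨C, hC⟩ := hh.lipschitzWith_of_hasCompactSupport hc one_ne_zero
  have h1 : LipschitzWith 0 (fun _ : Fin d → ℝ => (1:ℝ)) := LipschitzWith.const 1
  have key := LipschitzWith.integral_lineDeriv_mul_eq (μ := volume) h1 hC hc (-v)
  have l1 : ∀ x : Fin d → ℝ, lineDeriv ℝ (fun _ : Fin d → ℝ => (1:ℝ)) x (-v) = 0 := by
    intro x
    rw [(differentiableAt_const (1:ℝ)).lineDeriv_eq_fderiv, fderiv_fun_const]
    simp
  have l2 : ∀ x : Fin d → ℝ, lineDeriv ℝ h x (-(-v)) = fderiv ℝ h x v := by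
    intro x
    rw [neg_neg, (hh.differentiable one_ne_zero x).lineDeriv_eq_fderiv]
  simp only [l1, l2, zero_mul, mul_one, integral_zero] at key
  exact key.symm

/-- Integration by parts in direction `v`. -/
lemma ibp (f g : (Fin d → ℝ) → ℝ) (hf : ContDiff ℝ 1 f) (hg : ContDiff ℝ 1 g)
    (hcg : HasCompactSupport g) (v : Fin d → ℝ) :
    ∫ x : Fin d → ℝ, fderiv ℝ f x v * g x = - ∫ x : Fin d → ℝ, f x * fderiv ℝ g x v := by
  have hfg : ContDiff ℝ 1 (fun x => f x * g x) := hf.mul hg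
  have hcfg : HasCompactSupport (fun x => f x * g x) := hcg.mul_left
  have h0 := integral_pderiv_eq_zero _ hfg hcfg v
  have hd : ∀ x : Fin d → ℝ, fderiv ℝ (fun x => f x * g x) x v
      = fderiv ℝ f x v * g x + f x * fderiv ℝ g x v := by
    intro x
    rw [fderiv_fun_mul (hf.differentiable one_ne_zero x) (hg.differentiable one_ne_zero x)]
    simp only [ContinuousLinearMap.add_apply, ContinuousLinearMap.smul_apply, smul_eq_mul]
    ring
  have cf : Continuous fun x : Fin d → ℝ => fderiv ℝ f x v :=
    (ContinuousLinearMap.apply ℝ ℝ v).continuous.comp (hf.continuous_fderiv one_ne_zero)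
  have cg : Continuous fun x : Fin d → ℝ => fderiv ℝ g x v :=
    (ContinuousLinearMap.apply ℝ ℝ v).continuous.comp (hg.continuous_fderiv one_ne_zero)
  have hcg' : HasCompactSupport fun x : Fin d → ℝ => fderiv ℝ g x v :=
    (hcg.fderiv ℝ).comp_left (g := fun L : (Fin d → ℝ) →L[ℝ] ℝ => L v) rfl
  have i1 : Integrable (fun x : Fin d → ℝ => fderiv ℝ f x v * g x) :=
    ((cf.mul (hg.continuous)).integrable_of_hasCompactSupport hcg.mul_left)
  have i2 : Integrable (fun x : Fin d → ℝ => f x * fderiv ℝ g x v) :=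
    (((hf.continuous).mul cg).integrable_of_hasCompactSupport hcg'.mul_left)
  rw [show (fun x : Fin d → ℝ => fderiv ℝ (fun x => f x * g x) x v)
      = fun x => fderiv ℝ f x v * g x + f x * fderiv ℝ g x v from funext hd,
    integral_add i1 i2] at h0
  linarith

variable {w : (Fin d → ℝ) → (Fin d → ℝ)}

lemma fderiv_comp_proj (hw : ContDiff ℝ (⊤ : ℕ∞) w) (i : Fin d) (x v : Fin d → ℝ) :
    fderiv ℝ (fun y => w y i) x v = fderiv ℝ w x v i := by
  have h : HasFDerivAt (fun y => w y i)
      ((ContinuousLinearMap.proj i).comp (fderiv ℝ w x)) x :=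
    ((ContinuousLinearMap.proj i : ((Fin d → ℝ)) →L[ℝ] ℝ).hasFDerivAt).comp x
      (hw.differentiable (by simp) x).hasFDerivAt
  rw [h.fderiv]
  rfl

lemma contDiff_jac (hw : ContDiff ℝ (⊤ : ℕ∞) w) (i j : Fin d) :
    ContDiff ℝ (⊤ : ℕ∞) fun x => jac w x i j := by
  have h1 : ContDiff ℝ (⊤ : ℕ∞) (fderiv ℝ w) := hw.fderiv_right le_rfl
  have h2 : ContDiff ℝ (⊤ : ℕ∞) fun x => fderiv ℝ w x (Pi.single j 1) :=
    h1.clm_apply contDiff_const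
  exact (ContinuousLinearMap.proj i).contDiff.comp h2

lemma hasCompactSupport_jac (hcw : HasCompactSupport w) (i j : Fin d) :
    HasCompactSupport fun x => jac w x i j :=
  (hcw.fderiv ℝ).comp_left
    (g := fun L : (Fin d → ℝ) →L[ℝ] (Fin d → ℝ) => L (Pi.single j 1) i) rfl

lemma contDiff_comp' (hw : ContDiff ℝ (⊤ : ℕ∞) w) (i : Fin d) :
    ContDiff ℝ (⊤ : ℕ∞) fun x => w x i :=
  (ContinuousLinearMap.proj i : ((Fin d → ℝ)) →L[ℝ] ℝ).contDiff.comp hw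

lemma hasCompactSupport_comp' (hcw : HasCompactSupport w) (i : Fin d) :
    HasCompactSupport fun x => w x i :=
  hcw.comp_left (g := fun v : Fin d → ℝ => v i) rfl

lemma contDiff_divg' (hw : ContDiff ℝ (⊤ : ℕ∞) w) : ContDiff ℝ (⊤ : ℕ∞) (divg w) :=
  ContDiff.sum fun i _ => contDiff_jac hw i i

/-- Sum-of-components integration by parts:
`∫ Σᵢ ∂ᵢ f · wᵢ = − ∫ f · div w`. -/
lemma sum_ibp (hw : ContDiff ℝ (⊤ : ℕ∞) w) (hcw : HasCompactSupport w)
    (f : (Fin d → ℝ) → ℝ) (hf : ContDiff ℝ 1 f) :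
    ∫ x : Fin d → ℝ, ∑ i, fderiv ℝ f x (Pi.single i 1) * w x i
      = - ∫ x : Fin d → ℝ, f x * divg w x := by
  have cfd : ∀ v : Fin d → ℝ, Continuous fun x : Fin d → ℝ => fderiv ℝ f x v := fun v =>
    (ContinuousLinearMap.apply ℝ ℝ v).continuous.comp (hf.continuous_fderiv one_ne_zero)
  have int1 : ∀ i : Fin d, Integrable
      (fun x : Fin d → ℝ => fderiv ℝ f x (Pi.single i 1) * w x i) := fun i =>
    ((cfd _).mul (contDiff_comp' hw i).continuous).integrable_of_hasCompactSupport
      (hasCompactSupport_comp' hcw i).mul_left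
  have int2 : ∀ i : Fin d, Integrable (fun x : Fin d → ℝ => f x * jac w x i i) := fun i =>
    (hf.continuous.mul (contDiff_jac hw i i).continuous).integrable_of_hasCompactSupport
      (hasCompactSupport_jac hcw i i).mul_left
  rw [integral_finset_sum _ fun i _ => int1 i]
  have step : ∀ i : Fin d,
      (∫ x : Fin d → ℝ, fderiv ℝ f x (Pi.single i 1) * w x i)
        = - ∫ x : Fin d → ℝ, f x * jac w x i i := by
    intro i
    rw [ibp f (fun y => w y i) hf ((contDiff_comp' hw i).of_le (by simp))
      (hasCompactSupport_comp' hcw i) (Pi.single i 1)]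
    have hx : ∀ x : Fin d → ℝ,
        fderiv ℝ (fun y => w y i) x (Pi.single i 1) = jac w x i i := fun x =>
      fderiv_comp_proj hw i x _
    simp only [hx]
  simp only [step]
  rw [Finset.sum_neg_distrib, neg_inj, ← integral_finset_sum _ fun i _ => int2 i]
  congr 1
  funext x
  simp only [divg, Finset.mul_sum]

lemma sym_sum {d : ℕ} (a : Matrix (Fin d) (Fin d) ℝ) :
    ∑ i, ∑ j, (a i j + a j i) * a i j
      = (1/2) * ∑ i, ∑ j, (a i j + a j i) * (a i j + a j i) := by
  have hsym : ∑ i, ∑ j, (a i j + a j i) * a i j = ∑ i, ∑ j, (a i j + a j i) * a j i := by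
    rw [Finset.sum_comm]
    exact Finset.sum_congr rfl fun i _ => Finset.sum_congr rfl fun j _ => by ring
  have h2 : (∑ i, ∑ j, (a i j + a j i) * a i j) + (∑ i, ∑ j, (a i j + a j i) * a j i)
      = ∑ i, ∑ j, (a i j + a j i) * (a i j + a j i) := by
    rw [← Finset.sum_add_distrib]
    refine Finset.sum_congr rfl fun i _ => ?_
    rw [← Finset.sum_add_distrib]
    exact Finset.sum_congr rfl fun j _ => by ring
  linarith [hsym, h2]

lemma mat_ibp {d : ℕ} {w : (Fin d → ℝ) → (Fin d → ℝ)}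
    (hw : ContDiff ℝ (⊤ : ℕ∞) w) (hcw : HasCompactSupport w)
    (μ : (Fin d → ℝ) → ℝ) (hμ : ContDiff ℝ 1 μ) :
    ∫ x : Fin d → ℝ, ∑ i, divMat (fun y => μ y • Ef w y) x i * w x i
      = - ((1:ℝ)/2) * ∫ x : Fin d → ℝ, μ x * frob (Ef w x) (Ef w x) := by
  classical
  set F : Fin d → Fin d → (Fin d → ℝ) → ℝ :=
    fun i j y => μ y * (jac w y i j + jac w y j i) with hF
  have hM : ∀ i j : Fin d, (fun y => (μ y • Ef w y) i j) = F i j := by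
    intro i j; funext y
    simp [F, Ef, Matrix.smul_apply, Matrix.add_apply, Matrix.transpose_apply, smul_eq_mul]
  have hFc : ∀ i j : Fin d, ContDiff ℝ 1 (F i j) := fun i j =>
    hμ.mul (((contDiff_jac hw i j).add (contDiff_jac hw j i)).of_le (by simp))
  have cfd : ∀ (i j : Fin d) (v : Fin d → ℝ),
      Continuous fun x : Fin d → ℝ => fderiv ℝ (F i j) x v := fun i j v =>
    (ContinuousLinearMap.apply ℝ ℝ v).continuous.comp ((hFc i j).continuous_fderiv one_ne_zero)
  have int1 : ∀ i j : Fin d,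
      Integrable fun x : Fin d → ℝ => fderiv ℝ (F i j) x (Pi.single j 1) * w x i := fun i j =>
    ((cfd i j _).mul (contDiff_comp' hw i).continuous).integrable_of_hasCompactSupport
      (hasCompactSupport_comp' hcw i).mul_left
  have int2 : ∀ i j : Fin d,
      Integrable fun x : Fin d → ℝ => F i j x * jac w x i j := fun i j =>
    ((hFc i j).continuous.mul (contDiff_jac hw i j).continuous).integrable_of_hasCompactSupport
      (hasCompactSupport_jac hcw i j).mul_left
  have e1 : (fun x : Fin d → ℝ => ∑ i, divMat (fun y => μ y • Ef w y) x i * w x i)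
      = fun x => ∑ i, ∑ j, fderiv ℝ (F i j) x (Pi.single j 1) * w x i := by
    funext x
    refine Finset.sum_congr rfl fun i _ => ?_
    rw [divMat, Finset.sum_mul]
    refine Finset.sum_congr rfl fun j _ => ?_
    rw [hM i j]
  rw [e1, integral_finset_sum _ fun i _ => integrable_finset_sum _ fun j _ => int1 i j]
  have step : ∀ i : Fin d,
      (∫ x : Fin d → ℝ, ∑ j, fderiv ℝ (F i j) x (Pi.single j 1) * w x i)
        = ∑ j, - ∫ x : Fin d → ℝ, F i j x * jac w x i j := by
    intro i
    rw [integral_finset_sum _ fun j _ => int1 i j]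
    refine Finset.sum_congr rfl fun j _ => ?_
    rw [ibp (F i j) (fun y => w y i) (hFc i j) ((contDiff_comp' hw i).of_le (by simp))
      (hasCompactSupport_comp' hcw i) (Pi.single j 1)]
    have hx : ∀ x : Fin d → ℝ,
        fderiv ℝ (fun y => w y i) x (Pi.single j 1) = jac w x i j := fun x =>
      fderiv_comp_proj hw i x _
    simp only [hx]
  simp only [step, Finset.sum_neg_distrib]
  rw [← Finset.sum_neg_distrib, Finset.sum_neg_distrib]
  rw [neg_mul, neg_inj]
  have swap : ∀ i : Fin d, ∑ j, (∫ x : Fin d → ℝ, F i j x * jac w x i j)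
      = ∫ x : Fin d → ℝ, ∑ j, F i j x * jac w x i j := fun i =>
    (integral_finset_sum _ fun j _ => int2 i j).symm
  simp only [swap]
  rw [← integral_finset_sum _ fun i _ => integrable_finset_sum _ fun j _ => int2 i j]
  have ptw : ∀ x : Fin d → ℝ,
      ∑ i, ∑ j, F i j x * jac w x i j
        = (1/2) * (μ x * frob (Ef w x) (Ef w x)) := by
    intro x
    have hfr : frob (Ef w x) (Ef w x)
        = ∑ i, ∑ j, (jac w x i j + jac w x j i) * (jac w x i j + jac w x j i) := by
      simp [frob, Ef, Matrix.add_apply, Matrix.transpose_apply]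
    have : ∑ i, ∑ j, F i j x * jac w x i j
        = μ x * ∑ i, ∑ j, (jac w x i j + jac w x j i) * jac w x i j := by
      rw [Finset.mul_sum]
      refine Finset.sum_congr rfl fun i _ => ?_
      rw [Finset.mul_sum]
      exact Finset.sum_congr rfl fun j _ => by simp [F]; ring
    rw [this, sym_sum (jac w x), hfr]
    ring
  simp only [ptw]
  rw [MeasureTheory.integral_const_mul]

end Aux

/-- Energy identity for the difference system: if `w` is smooth, compactly supported, and
`∇(λ div w) + ω² w + ∇·(μ E(w)) = ∇p` on `ℝ^d`, then
`∫ λ (div w)² + ½ ∫ μ |E(w)|² − ω² ∫ |w|² = ∫ p (div w)`. -/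
theorem difference_energy_identity (d : ℕ) (hd : 1 ≤ d) (ω : ℝ)
    (lam μ p : (Fin d → ℝ) → ℝ)
    (hlam : ContDiff ℝ 1 lam) (hμ : ContDiff ℝ 1 μ) (hp : ContDiff ℝ 1 p)
    (w : (Fin d → ℝ) → (Fin d → ℝ)) (hw : ContDiff ℝ (⊤ : ℕ∞) w) (hcw : HasCompactSupport w)
    (heq : ∀ x : Fin d → ℝ,
      gradf (fun y => lam y * divg w y) x + ω ^ 2 • w x
        + divMat (fun y => μ y • Ef w y) x = gradf p x) :
    (∫ x : Fin d → ℝ, lam x * (divg w x) ^ 2)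
        + (1 / 2) * (∫ x : Fin d → ℝ, μ x * frob (Ef w x) (Ef w x))
        - ω ^ 2 * ∫ x : Fin d → ℝ, ∑ i, (w x i) ^ 2 =
      ∫ x : Fin d → ℝ, p x * divg w x := by
  classical
  have hdiv1 : ContDiff ℝ 1 (divg w) := (contDiff_divg' hw).of_le (by simp)
  set L : (Fin d → ℝ) → ℝ := fun y => lam y * divg w y with hL
  have hLc : ContDiff ℝ 1 L := hlam.mul hdiv1
  set M : (Fin d → ℝ) → Matrix (Fin d) (Fin d) ℝ := fun y => μ y • Ef w y with hMdef
  -- pointwise identity obtained by taking the dot product of the PDE with `w`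
  have ptw : ∀ x : Fin d → ℝ,
      (∑ i, gradf L x i * w x i) + ω ^ 2 * (∑ i, (w x i) ^ 2)
        + (∑ i, divMat M x i * w x i)
      = ∑ i, gradf p x i * w x i := by
    intro x
    have hcomp : ∀ i, gradf L x i + ω ^ 2 * w x i + divMat M x i = gradf p x i := by
      intro i
      have := congrFun (heq x) i
      simpa [Pi.add_apply, Pi.smul_apply, smul_eq_mul] using this
    have e : ∀ i : Fin d, gradf L x i * w x i + ω ^ 2 * (w x i) ^ 2
        + divMat M x i * w x i = gradf p x i * w x i := by
      intro i
      calc gradf L x i * w x i + ω ^ 2 * (w x i) ^ 2 + divMat M x i * w x i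
          = (gradf L x i + ω ^ 2 * w x i + divMat M x i) * w x i := by ring
        _ = gradf p x i * w x i := by rw [hcomp i]
    rw [Finset.mul_sum, ← Finset.sum_add_distrib, ← Finset.sum_add_distrib]
    exact Finset.sum_congr rfl fun i _ => e i
  -- continuity and integrability facts
  have cw : ∀ i : Fin d, Continuous fun x : Fin d → ℝ => w x i := fun i =>
    (contDiff_comp' hw i).continuous
  have csw : ∀ i : Fin d, HasCompactSupport fun x : Fin d → ℝ => w x i :=
    hasCompactSupport_comp' hcw
  have cgradL : ∀ i : Fin d, Continuous fun x : Fin d → ℝ => gradf L x i := fun i =>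
    (ContinuousLinearMap.apply ℝ ℝ (Pi.single i 1)).continuous.comp
      (hLc.continuous_fderiv one_ne_zero)
  have cgradp : ∀ i : Fin d, Continuous fun x : Fin d → ℝ => gradf p x i := fun i =>
    (ContinuousLinearMap.apply ℝ ℝ (Pi.single i 1)).continuous.comp
      (hp.continuous_fderiv one_ne_zero)
  have intA : Integrable fun x : Fin d → ℝ => ∑ i, gradf L x i * w x i :=
    integrable_finset_sum _ fun i _ =>
      ((cgradL i).mul (cw i)).integrable_of_hasCompactSupport (csw i).mul_left
  have intD : Integrable fun x : Fin d → ℝ => ∑ i, gradf p x i * w x i :=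
    integrable_finset_sum _ fun i _ =>
      ((cgradp i).mul (cw i)).integrable_of_hasCompactSupport (csw i).mul_left
  have intB : Integrable fun x : Fin d → ℝ => ω ^ 2 * ∑ i, (w x i) ^ 2 := by
    refine (continuous_const.mul ?_).integrable_of_hasCompactSupport ?_
    · exact continuous_finset_sum _ fun i _ => (cw i).pow 2
    · exact (hcw.comp_left (g := fun v : Fin d → ℝ => ∑ i, (v i) ^ 2) (by simp)).mul_left
  have cdivM : ∀ i : Fin d, Continuous fun x : Fin d → ℝ => divMat M x i := by
    intro i
    have hrw : (fun x : Fin d → ℝ => divMat M x i)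
        = fun x => ∑ j, fderiv ℝ (fun y => μ y * (jac w y i j + jac w y j i)) x
            (Pi.single j 1) := by
      funext x
      refine Finset.sum_congr rfl fun j _ => ?_
      congr 1
    rw [hrw]
    refine continuous_finset_sum _ fun j _ => ?_
    exact (ContinuousLinearMap.apply ℝ ℝ (Pi.single j 1)).continuous.comp
      ((hμ.mul (((contDiff_jac hw i j).add (contDiff_jac hw j i)).of_le
        (by simp))).continuous_fderiv one_ne_zero)
  have intC : Integrable fun x : Fin d → ℝ => ∑ i, divMat M x i * w x i :=
    integrable_finset_sum _ fun i _ =>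
      ((cdivM i).mul (cw i)).integrable_of_hasCompactSupport (csw i).mul_left
  -- integrate the pointwise identity and split
  have key : (∫ x : Fin d → ℝ, ∑ i, gradf L x i * w x i)
      + (∫ x : Fin d → ℝ, ω ^ 2 * ∑ i, (w x i) ^ 2)
      + (∫ x : Fin d → ℝ, ∑ i, divMat M x i * w x i)
      = ∫ x : Fin d → ℝ, ∑ i, gradf p x i * w x i := by
    have intAB : Integrable fun x : Fin d → ℝ =>
        (∑ i, gradf L x i * w x i) + ω ^ 2 * ∑ i, (w x i) ^ 2 := intA.add intB
    rw [← integral_add intA intB, ← integral_add intAB intC]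
    simp only [ptw]
  -- evaluate each piece by integration by parts
  have eA : (∫ x : Fin d → ℝ, ∑ i, gradf L x i * w x i)
      = - ∫ x : Fin d → ℝ, lam x * (divg w x) ^ 2 := by
    have := sum_ibp hw hcw L hLc
    rw [show (fun x : Fin d → ℝ => L x * divg w x)
        = fun x => lam x * (divg w x) ^ 2 from funext fun x => by simp [hL]; ring] at this
    exact this
  have eD : (∫ x : Fin d → ℝ, ∑ i, gradf p x i * w x i)
      = - ∫ x : Fin d → ℝ, p x * divg w x := sum_ibp hw hcw p hp
  have eC : (∫ x : Fin d → ℝ, ∑ i, divMat M x i * w x i)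
      = - ((1:ℝ)/2) * ∫ x : Fin d → ℝ, μ x * frob (Ef w x) (Ef w x) :=
    mat_ibp hw hcw μ hμ
  have eB : (∫ x : Fin d → ℝ, ω ^ 2 * ∑ i, (w x i) ^ 2)
      = ω ^ 2 * ∫ x : Fin d → ℝ, ∑ i, (w x i) ^ 2 := by
    rw [MeasureTheory.integral_const_mul]
  rw [eA, eB, eC, eD] at key
  linarith
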